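/- arXiv:1108.2098 — 6 statements merged into one kernel-verified Lean document; each statement's English description precedes it below -/
import Mathlib

section
/- Let φ, ψ be unit vectors in ℂ^n and let P, Q be the probability distributions on {0,…,n−1} given by P(k) = |φ_k|², Q(k) = |ψ_k|². Then (1/2)·Σ_k |P(k) − Q(k)| ≤ sqrt(1 − |⟨φ,ψ⟩|²). -/
open Finset in
/-- The statistical distance between the computational-basis measurement distributions of
two pure states is at most `sqrt (1 - |⟨φ,ψ⟩|²)`. -/
theorem stmt_2 {n : ℕ} (φ ψ : Fin n → ℂ)
    (hφ : ∑ k, ‖φ k‖ ^ 2 = 1) (hψ : ∑ k, ‖ψ k‖ ^ 2 = 1) :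
    (1 / 2) * ∑ k, |‖φ k‖ ^ 2 - ‖ψ k‖ ^ 2| ≤
      Real.sqrt (1 - ‖∑ k, (starRingEnd ℂ) (φ k) * ψ k‖ ^ 2) := by
  set a : Fin n → ℝ := fun k => ‖φ k‖ with ha
  set b : Fin n → ℝ := fun k => ‖ψ k‖ with hb
  set S : ℝ := ∑ k, a k * b k with hSdef
  set I : ℝ := ‖∑ k, (starRingEnd ℂ) (φ k) * ψ k‖ with hIdef
  have hI0 : (0:ℝ) ≤ I := norm_nonneg _
  have hIS : I ≤ S := by
    calc I ≤ ∑ k, ‖(starRingEnd ℂ) (φ k) * ψ k‖ := norm_sum_le _ _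
    _ = S := by simp [hSdef, ha, hb]
  have hS1 : S ≤ 1 := by
    have h : ∀ k ∈ Finset.univ (α := Fin n), a k * b k ≤ (a k ^ 2 + b k ^ 2) / 2 :=
      fun k _ => by nlinarith [sq_nonneg (a k - b k)]
    calc S ≤ ∑ k, (a k ^ 2 + b k ^ 2) / 2 := Finset.sum_le_sum h
    _ = 1 := by
        rw [show (∑ k, (a k ^ 2 + b k ^ 2) / 2) = ((∑ k, a k ^ 2) + ∑ k, b k ^ 2) / 2 by
          rw [← Finset.sum_add_distrib, Finset.sum_div], hφ, hψ]
        norm_num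
  set T : ℝ := ∑ k, |a k ^ 2 - b k ^ 2| with hTdef
  have hT0 : 0 ≤ T := Finset.sum_nonneg fun k _ => abs_nonneg _
  have hTeq : T = ∑ k, |a k - b k| * (a k + b k) := by
    refine Finset.sum_congr rfl fun k _ => ?_
    have h1 : a k ^ 2 - b k ^ 2 = (a k - b k) * (a k + b k) := by ring
    rw [h1, abs_mul, abs_of_nonneg (by positivity : (0:ℝ) ≤ a k + b k)]
  have hCS : T ^ 2 ≤ (∑ k, |a k - b k| ^ 2) * ∑ k, (a k + b k) ^ 2 := by
    rw [hTeq]; exact Finset.sum_mul_sq_le_sq_mul_sq _ _ _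
  have h1 : ∑ k, |a k - b k| ^ 2 = 2 - 2 * S := by
    have : ∀ k, |a k - b k| ^ 2 = a k ^ 2 + b k ^ 2 - 2 * (a k * b k) := fun k => by
      rw [sq_abs]; ring
    simp_rw [this]
    rw [Finset.sum_sub_distrib, Finset.sum_add_distrib, hφ, hψ, ← Finset.mul_sum]
    ring
  have h2 : ∑ k, (a k + b k) ^ 2 = 2 + 2 * S := by
    have : ∀ k, (a k + b k) ^ 2 = a k ^ 2 + b k ^ 2 + 2 * (a k * b k) := fun k => by ring
    simp_rw [this]
    rw [Finset.sum_add_distrib, Finset.sum_add_distrib, hφ, hψ, ← Finset.mul_sum]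
    ring
  have hkey : T ^ 2 ≤ 4 * (1 - I ^ 2) := by
    rw [h1, h2] at hCS
    nlinarith
  have hI1 : I ≤ 1 := hIS.trans hS1
  rw [Real.le_sqrt (by positivity)]
  · nlinarith

  · nlinarith
end

section
/- Let N, K ≥ 1 and let Ψ = Σ_v α_v |v⟩ Σ_j β_{v,j}|j⟩ be a graph coloring state (unit vector in ℂ^N ⊗ ℂ^K, with Σ_j |β_{v,j}|² = 1 for all v). Fix ε ∈ [0,1]. Suppose p_0(Ψ) ≥ 1/(4K) (probability of measuring color 0 after applying I_N ⊗ F_K) and |{v : |α_v|² < 1/(8K N)}| ≥ εN. Then the uniformity test rejects Ψ with probability at least ε²/(64K); i.e., the probability of measuring color 0 and a nonzero vertex outcome after applying F_N ⊗ F_K to Ψ is at least ε²/(64K). -/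
/-!
Let `γ_v = α_v · (F_K β_v)(0)` be the color-`0` amplitudes, `P = Σ_v |γ_v|² ≥ 1/(4K)`. By Parseval
the rejection probability is `P - |Σ_v γ_v|²/N ≥ P - (Σ_v |γ_v|)²/N`. With `m = √(P/N)`,
Cauchy–Schwarz applied to `|a² - m²| = |a - m| |a + m|` bounds `(Σ_v ||γ_v|² - P/N|)²` by
`4P (P - (Σ_v |γ_v|)²/N)`. Every light vertex has `|γ_v|² ≤ |α_v|² < P/(2N)`, so that deviation
sum is at least `εP/2`, and the rejection probability is at least `ε²P/16 ≥ ε²/(64K)`.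
-/

open Finset ComplexConjugate

theorem sum_norm_sq_sum_mul_eq_of_orthogonal {ι κ : Type*} [Fintype ι] [Fintype κ]
    [DecidableEq ι] (e : κ → ι → ℂ) (c : ℝ)
    (he : ∀ w w', ∑ v, e v w * conj (e v w') = if w = w' then (c : ℂ) else 0) (x : ι → ℂ) :
    ∑ v, ‖∑ w, e v w * x w‖ ^ 2 = c * ∑ w, ‖x w‖ ^ 2 := by
  suffices h : ((∑ v, ‖∑ w, e v w * x w‖ ^ 2 : ℝ) : ℂ) = c * ∑ w, ‖x w‖ ^ 2 from
    mod_cast h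
  push_cast
  simp_rw [← Complex.mul_conj', map_sum, map_mul, sum_mul_sum]
  calc ∑ v, ∑ w, ∑ w', e v w * x w * (conj (e v w') * conj (x w'))
      = ∑ w, ∑ w', x w * conj (x w') * ∑ v, e v w * conj (e v w') := by
        rw [sum_comm]
        refine sum_congr rfl fun w _ => ?_
        rw [sum_comm]
        simp_rw [mul_sum]
        exact sum_congr rfl fun w' _ => sum_congr rfl fun v _ => by ring
    _ = c * ∑ w, x w * conj (x w) := by
        simp_rw [he, mul_ite, mul_zero, sum_ite_eq, mem_univ, if_true, mul_sum]
        exact sum_congr rfl fun w _ => by ring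

theorem sq_sum_abs_sq_sub_mean_le {ι : Type*} [Fintype ι] [Nonempty ι] (a : ι → ℝ) :
    (∑ v, |a v ^ 2 - (∑ w, a w ^ 2) / Fintype.card ι|) ^ 2 ≤
      4 * (∑ w, a w ^ 2) * (∑ w, a w ^ 2 - (∑ w, a w) ^ 2 / Fintype.card ι) := by
  set n : ℝ := (Fintype.card ι : ℝ)
  set P := ∑ w, a w ^ 2
  set S := ∑ w, a w
  have hn : n ≠ 0 := Nat.cast_ne_zero.2 Fintype.card_ne_zero
  set m := Real.sqrt (P / n)
  have hm : m ^ 2 = P / n := Real.sq_sqrt (by positivity)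
  have hfactor : ∀ v, |a v ^ 2 - P / n| = |a v - m| * |a v + m| := fun v => by
    rw [← hm, ← abs_mul]; ring_nf
  have hsum : ∀ s : ℝ, ∑ v, (a v + s * m) ^ 2 = P + 2 * s * m * S + s ^ 2 * P := fun s => by
    simp only [add_sq, sum_add_distrib, sum_const, card_univ, nsmul_eq_mul, mul_pow, hm,
      ← sum_mul, ← mul_sum]
    field_simp; ring
  calc (∑ v, |a v ^ 2 - P / n|) ^ 2
      = (∑ v, |a v - m| * |a v + m|) ^ 2 := by simp_rw [hfactor]
    _ ≤ (∑ v, |a v - m| ^ 2) * ∑ v, |a v + m| ^ 2 := sum_mul_sq_le_sq_mul_sq _ _ _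
    _ = (∑ v, (a v + (-1) * m) ^ 2) * ∑ v, (a v + 1 * m) ^ 2 := by
        simp [sq_abs, sub_eq_add_neg]
    _ = 4 * P * (P - S ^ 2 / n) := by
        have hnm : n * m ^ 2 = P := by rw [hm]; field_simp
        rw [hsum, hsum]; field_simp; linear_combination (-4 * S ^ 2) * hnm

theorem card_mul_sub_le_sum_abs_sub {ι : Type*} [Fintype ι] (a : ι → ℝ) (μ t : ℝ)
    {L : Finset ι} (hL : ∀ v ∈ L, a v ≤ t) : #L * (μ - t) ≤ ∑ v, |a v - μ| :=
  calc #L * (μ - t) = ∑ _v ∈ L, (μ - t) := by rw [sum_const, nsmul_eq_mul]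
    _ ≤ ∑ v ∈ L, |a v - μ| := sum_le_sum fun v hv => by
        rw [abs_sub_comm]; exact (sub_le_sub_left (hL v hv) μ).trans (le_abs_self _)
    _ ≤ ∑ v, |a v - μ| :=
        sum_le_sum_of_subset_of_nonneg (subset_univ L) fun _ _ _ => abs_nonneg _

theorem bijective_natCast_val_zmod {N : ℕ} [NeZero N] :
    Function.Bijective (fun v : Fin N => ((v : ℕ) : ZMod N)) := by
  refine (Fintype.bijective_iff_injective_and_card _).2 ⟨fun v w h => Fin.ext ?_, by simp⟩
  simpa only [ZMod.val_natCast_of_lt v.isLt, ZMod.val_natCast_of_lt w.isLt]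
    using congrArg ZMod.val h

theorem exp_eq_stdAddChar_mul {N : ℕ} [NeZero N] (a b : ℕ) :
    Complex.exp (2 * Real.pi * Complex.I * (a * b / N)) =
      ZMod.stdAddChar ((a : ZMod N) * (b : ZMod N)) := by
  rw [show (a : ZMod N) * b = ((a * b : ℕ) : ℤ) by push_cast; ring, ZMod.stdAddChar_coe]
  push_cast; ring_nf

theorem sum_exp_mul_conj_exp {N : ℕ} [NeZero N] (w w' : Fin N) :
    ∑ v : Fin N, Complex.exp (2 * Real.pi * Complex.I * ((v : ℕ) * (w : ℕ) / N)) *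
      conj (Complex.exp (2 * Real.pi * Complex.I * ((v : ℕ) * (w' : ℕ) / N)))
      = if w = w' then (N : ℂ) else 0 := by
  have hconj : ∀ a : ZMod N, conj (ZMod.stdAddChar a) = ZMod.stdAddChar (-a) := fun a => by
    rw [ZMod.stdAddChar_apply, ZMod.stdAddChar_apply, AddChar.map_neg_eq_inv,
      Circle.coe_inv_eq_conj]
  simp_rw [exp_eq_stdAddChar_mul, hconj, ← AddChar.map_add_eq_mul, ← mul_neg, ← mul_add,
    ← sub_eq_add_neg]
  rw [bijective_natCast_val_zmod.sum_comp
      (fun k => ZMod.stdAddChar (k * (((w : ℕ) : ZMod N) - ((w' : ℕ) : ZMod N)))),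
    AddChar.sum_mulShift _ (ZMod.isPrimitive_stdAddChar N)]
  simp [sub_eq_zero, bijective_natCast_val_zmod.injective.eq_iff]

/-- The unitary Fourier transform `F_N` of the paper. -/
noncomputable def qft (N : ℕ) (x : Fin N → ℂ) (v : Fin N) : ℂ :=
  (1 / Real.sqrt N : ℂ) *
    ∑ w : Fin N, Complex.exp (2 * Real.pi * Complex.I * ((v : ℕ) * (w : ℕ) / N)) * x w

theorem norm_one_div_sqrt_mul_sq (n : ℕ) (z : ℂ) :
    ‖(1 / Real.sqrt n : ℂ) * z‖ ^ 2 = ‖z‖ ^ 2 / n := by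
  rw [norm_mul, mul_pow, norm_div, norm_one, Complex.norm_real, Real.norm_eq_abs, div_pow,
    sq_abs, Real.sq_sqrt n.cast_nonneg, one_pow, one_div_mul_eq_div]

theorem sum_norm_sq_qft {N : ℕ} [NeZero N] (x : Fin N → ℂ) :
    ∑ v, ‖qft N x v‖ ^ 2 = ∑ w, ‖x w‖ ^ 2 := by
  simp_rw [qft, norm_one_div_sqrt_mul_sq, ← sum_div,
    sum_norm_sq_sum_mul_eq_of_orthogonal _ N
      (fun w w' => by simpa using sum_exp_mul_conj_exp w w')]
  exact mul_div_cancel_left₀ _ (Nat.cast_ne_zero.2 (NeZero.ne N))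

theorem qft_zero {N : ℕ} [NeZero N] (x : Fin N → ℂ) :
    qft N x 0 = (1 / Real.sqrt N : ℂ) * ∑ w, x w := by
  simp [qft]

theorem sum_norm_sq_qft_ne_zero {N : ℕ} [NeZero N] (x : Fin N → ℂ) :
    ∑ v ∈ univ.filter (fun v : Fin N => (v : ℕ) ≠ 0), ‖qft N x v‖ ^ 2
      = ∑ w, ‖x w‖ ^ 2 - ‖∑ w, x w‖ ^ 2 / N := by
  have hfilter : univ.filter (fun v : Fin N => (v : ℕ) ≠ 0) = univ.erase 0 := by
    ext v; simp [Fin.val_eq_zero_iff]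
  rw [hfilter, sum_erase_eq_sub (mem_univ 0), sum_norm_sq_qft, qft_zero,
    norm_one_div_sqrt_mul_sq]

theorem norm_one_div_sqrt_mul_sum_sq_le (n : ℕ) (z : Fin n → ℂ) :
    ‖(1 / Real.sqrt n : ℂ) * ∑ j, z j‖ ^ 2 ≤ ∑ j, ‖z j‖ ^ 2 := by
  rw [norm_one_div_sqrt_mul_sq]
  refine div_le_of_le_mul₀ n.cast_nonneg (sum_nonneg fun j _ => sq_nonneg _) ?_
  calc ‖∑ j, z j‖ ^ 2 ≤ (∑ j, ‖z j‖) ^ 2 := by gcongr; exact norm_sum_le _ _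
    _ ≤ n * ∑ j, ‖z j‖ ^ 2 := by
        simpa using sq_sum_le_card_mul_sum_sq (s := univ) (f := (‖z ·‖))
    _ = (∑ j, ‖z j‖ ^ 2) * n := mul_comm _ _

theorem sq_sum_abs_norm_sq_sub_mean_le_qft {N : ℕ} [NeZero N] (x : Fin N → ℂ) :
    (∑ v, |‖x v‖ ^ 2 - (∑ w, ‖x w‖ ^ 2) / N|) ^ 2 ≤
      4 * (∑ w, ‖x w‖ ^ 2) *
        ∑ v ∈ univ.filter (fun v : Fin N => (v : ℕ) ≠ 0), ‖qft N x v‖ ^ 2 := by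
  rw [sum_norm_sq_qft_ne_zero]
  have h := sq_sum_abs_sq_sub_mean_le (‖x ·‖)
  rw [Fintype.card_fin] at h
  refine h.trans ?_
  gcongr
  exact norm_sum_le _ _

theorem le_sum_norm_sq_qft_ne_zero_of_light {N : ℕ} [NeZero N] {p ε : ℝ} (hp : 0 < p)
    (hε : 0 ≤ ε) (x : Fin N → ℂ) (hx : p ≤ ∑ w, ‖x w‖ ^ 2) (L : Finset (Fin N))
    (hL : ∀ v ∈ L, ‖x v‖ ^ 2 < p / (2 * N)) (hcard : ε * N ≤ #L) :
    ε ^ 2 * p / 16 ≤ ∑ v ∈ univ.filter (fun v : Fin N => (v : ℕ) ≠ 0), ‖qft N x v‖ ^ 2 := by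
  set P := ∑ w, ‖x w‖ ^ 2
  have hNpos : (0 : ℝ) < N := Nat.cast_pos.2 (Nat.pos_of_neZero N)
  have hdev : ε * P / 2 ≤ ∑ v, |‖x v‖ ^ 2 - P / N| :=
    calc ε * P / 2 = (ε * N) * (P / (2 * N)) := by field_simp
      _ ≤ #L * (P / N - p / (2 * N)) := by
          have hp2 : p / (2 * N) ≤ P / (2 * N) := by gcongr
          have hP2 : P / N = P / (2 * N) + P / (2 * N) := by field_simp; ring
          exact mul_le_mul hcard (by linarith) (by positivity) (by positivity)
      _ ≤ _ := card_mul_sub_le_sum_abs_sub _ _ _ fun v hv => (hL v hv).le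
  have h := (pow_le_pow_left₀ (by positivity) hdev 2).trans
    (sq_sum_abs_norm_sq_sub_mean_le_qft x)
  have hP : 0 < P := hp.trans_le hx
  calc ε ^ 2 * p / 16 ≤ ε ^ 2 * P / 16 := by gcongr
    _ ≤ _ := by nlinarith

open Finset Real in
theorem stmt_13_general {N K : ℕ} (hN : 0 < N) (hK : 0 < K) (ε : ℝ) (hε0 : 0 ≤ ε)
    (α : Fin N → ℂ) (β : Fin N → Fin K → ℂ)
    (hβ : ∀ v, ∑ j, ‖β v j‖ ^ 2 = 1)
    (hp0 : 1 / (4 * K) ≤ ∑ v, ‖α v * ((1 / Real.sqrt K : ℂ) * ∑ j, β v j)‖ ^ 2)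
    (hlight : ε * N ≤
      ((Finset.univ.filter fun v : Fin N => ‖α v‖ ^ 2 < 1 / (8 * K * N)).card : ℝ)) :
    ε ^ 2 / (64 * K) ≤
      ∑ v ∈ Finset.univ.filter (fun v : Fin N => (v : ℕ) ≠ 0),
        ‖(1 / Real.sqrt N : ℂ) *
          ∑ w : Fin N, Complex.exp (2 * Real.pi * Complex.I * ((v : ℕ) * (w : ℕ) / N)) *
            (α w * ((1 / Real.sqrt K : ℂ) * ∑ j, β w j))‖ ^ 2 := by
  have : NeZero N := ⟨hN.ne'⟩
  have hγ : ∀ v, ‖α v * ((1 / Real.sqrt K : ℂ) * ∑ j, β v j)‖ ^ 2 ≤ ‖α v‖ ^ 2 := fun v => by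
    rw [norm_mul, mul_pow]
    exact mul_le_of_le_one_right (sq_nonneg _)
      ((norm_one_div_sqrt_mul_sum_sq_le K (β v)).trans (hβ v).le)
  have hthreshold : (1 / (8 * K * N) : ℝ) = 1 / (4 * K) / (2 * N) := by field_simp; ring
  calc ε ^ 2 / (64 * K) = ε ^ 2 * (1 / (4 * K)) / 16 := by field_simp; ring
    _ ≤ _ := le_sum_norm_sq_qft_ne_zero_of_light (by positivity) hε0 _ hp0 _
      (fun v hv => (hγ v).trans_lt (hthreshold ▸ (mem_filter.1 hv).2)) hlight

open Finset Real in
/-- If the color `0` is measured with probability at least `1/(4K)` after `I_N ⊗ F_K`, and at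
least `εN` vertices are light (`|α_v|² < 1/(8KN)`), then the uniformity test (measure
`(F_N ⊗ F_K)Ψ` and reject on color `0` with nonzero vertex) rejects with probability at
least `ε²/(64K)`. -/
theorem stmt_13 {N K : ℕ} (hN : 0 < N) (hK : 0 < K) (ε : ℝ) (hε0 : 0 ≤ ε) (hε1 : ε ≤ 1)
    (α : Fin N → ℂ) (β : Fin N → Fin K → ℂ)
    (hα : ∑ v, ‖α v‖ ^ 2 = 1) (hβ : ∀ v, ∑ j, ‖β v j‖ ^ 2 = 1)
    (hp0 : 1 / (4 * K) ≤ ∑ v, ‖α v * ((1 / Real.sqrt K : ℂ) * ∑ j, β v j)‖ ^ 2)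
    (hlight : ε * N ≤
      ((Finset.univ.filter fun v : Fin N => ‖α v‖ ^ 2 < 1 / (8 * K * N)).card : ℝ)) :
    ε ^ 2 / (64 * K) ≤
      ∑ v ∈ Finset.univ.filter (fun v : Fin N => (v : ℕ) ≠ 0),
        ‖(1 / Real.sqrt N : ℂ) *
          ∑ w : Fin N, Complex.exp (2 * Real.pi * Complex.I * ((v : ℕ) * (w : ℕ) / N)) *
            (α w * ((1 / Real.sqrt K : ℂ) * ∑ j, β w j))‖ ^ 2 :=
  stmt_13_general hN hK ε hε0 α β hβ hp0 hlight
end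

section
/- Let N, K ≥ 1, δ = 1/(2·1600²K⁴N²), μ = 1/(1600²K⁴N²). Let Ψ⁽¹⁾, Ψ⁽²⁾ be graph coloring states in ℂ^N⊗ℂ^K with amplitudes α_v⁽ᵗ⁾, β⁽ᵗ⁾_{v,j}. Assume: (i) (1 − |⟨Ψ⁽¹⁾,Ψ⁽²⁾⟩|²)/2 ≤ δ; (ii) the color-consistency test rejects with probability at most μ, i.e., Σ_v Σ_j Σ_{j'≠j} |α_v⁽¹⁾β⁽¹⁾_{v,j}|²·|α_v⁽²⁾β⁽²⁾_{v,j'}|² ≤ μ. Then for every vertex v with |α_v⁽¹⁾|² ≥ 1/(8N), there exists a unique color j with |β⁽¹⁾_{v,j}|² ≥ (100K−1)/(100K). -/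
/-!
View both states as unit vectors `x = α¹β¹`, `y = α²β²` indexed by (vertex, color). Splitting off
one coordinate and applying Cauchy–Schwarz to the rest gives
`|⟨x, y⟩|² ≤ 1 - (|x_i|² - |y_i|²)²`, so the swap test forces `|y_i|² ≥ |x_i|² - ε` with
`ε = 1/(1600K²N)` at every coordinate. If a heavy vertex `v` had no color of weight
`≥ 1 - 1/(100K)`, it would have a color `j₁` of weight `≥ 1/K` and another color `j₂` of weight
`> 1/(100K²)`. Then `|y_{v,j₂}|² ≥ 1/(1600NK²)`, and the single term `|x_{v,j₁}|² |y_{v,j₂}|²` of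
the consistency sum is at least `1/(12800N²K³) > μ`. Uniqueness holds because the threshold
exceeds `1/2`.
-/

open Finset

section InnerProduct

variable {𝕜 ι : Type*} [RCLike 𝕜]

lemma norm_sum_conj_mul_sq_le (s : Finset ι) (x y : ι → 𝕜) :
    ‖∑ k ∈ s, starRingEnd 𝕜 (x k) * y k‖ ^ 2 ≤ (∑ k ∈ s, ‖x k‖ ^ 2) * ∑ k ∈ s, ‖y k‖ ^ 2 := by
  have h : ‖∑ k ∈ s, starRingEnd 𝕜 (x k) * y k‖ ≤ ∑ k ∈ s, ‖x k‖ * ‖y k‖ :=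
    (norm_sum_le _ _).trans_eq (by simp only [norm_mul, RCLike.norm_conj])
  exact (pow_le_pow_left₀ (norm_nonneg _) h 2).trans (sum_mul_sq_le_sq_mul_sq s _ _)

variable [Fintype ι]

lemma norm_sq_le_one_of_sum_norm_sq_eq_one {x : ι → 𝕜} (hx : ∑ k, ‖x k‖ ^ 2 = 1) (i : ι) :
    ‖x i‖ ^ 2 ≤ 1 :=
  hx ▸ single_le_sum (f := fun k => ‖x k‖ ^ 2) (fun _ _ => sq_nonneg _) (mem_univ i)

variable [DecidableEq ι]

lemma norm_sum_conj_mul_sq_le_one_sub {x y : ι → 𝕜} (hx : ∑ k, ‖x k‖ ^ 2 = 1)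
    (hy : ∑ k, ‖y k‖ ^ 2 = 1) (i : ι) :
    ‖∑ k, starRingEnd 𝕜 (x k) * y k‖ ^ 2 ≤ 1 - (‖x i‖ ^ 2 - ‖y i‖ ^ 2) ^ 2 := by
  have hrest := norm_sum_conj_mul_sq_le (univ.erase i) x y
  rw [sum_erase_eq_sub (mem_univ i), sum_erase_eq_sub (mem_univ i),
    sum_erase_eq_sub (mem_univ i), hx, hy] at hrest
  set c := ∑ k, starRingEnd 𝕜 (x k) * y k
  have hsplit : ‖c‖ ≤ ‖x i‖ * ‖y i‖ + ‖c - starRingEnd 𝕜 (x i) * y i‖ := by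
    rw [← RCLike.norm_conj (x i), ← norm_mul]
    exact norm_le_norm_add_norm_sub' _ _
  set p := ‖x i‖
  set q := ‖y i‖
  set t := ‖c - starRingEnd 𝕜 (x i) * y i‖
  have hp := norm_sq_le_one_of_sum_norm_sq_eq_one hx i
  have hq := norm_sq_le_one_of_sum_norm_sq_eq_one hy i
  -- AM-GM for `p √(1 - p²)` and `q √(1 - q²)`, whose product is at least `p q t`
  have hcross : 2 * p * q * t ≤ p ^ 2 * (1 - p ^ 2) + q ^ 2 * (1 - q ^ 2) := by
    refine abs_le_of_sq_le_sq' ?_ (by nlinarith) |>.2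
    nlinarith [mul_le_mul_of_nonneg_left hrest (by positivity : (0 : ℝ) ≤ 4 * p ^ 2 * q ^ 2),
      sq_nonneg (p ^ 2 * (1 - p ^ 2) - q ^ 2 * (1 - q ^ 2))]
  have h0 : 0 ≤ ‖c‖ := norm_nonneg _
  nlinarith [mul_le_mul hsplit hsplit h0 (by positivity)]

lemma sub_le_norm_sq_of_one_sub_norm_sum_conj_mul_sq_le {x y : ι → 𝕜}
    (hx : ∑ k, ‖x k‖ ^ 2 = 1) (hy : ∑ k, ‖y k‖ ^ 2 = 1) {ε : ℝ} (hε : 0 ≤ ε)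
    (h : 1 - ‖∑ k, starRingEnd 𝕜 (x k) * y k‖ ^ 2 ≤ ε ^ 2) (i : ι) :
    ‖x i‖ ^ 2 - ε ≤ ‖y i‖ ^ 2 := by
  have hcoord := norm_sum_conj_mul_sq_le_one_sub hx hy i
  linarith [(abs_le_of_sq_le_sq' (a := ‖x i‖ ^ 2 - ‖y i‖ ^ 2) (by linarith) hε).2]

end InnerProduct

lemma sum_norm_mul_sq_eq_one {𝕜 ι κ : Type*} [RCLike 𝕜] [Fintype ι] [Fintype κ]
    {α : ι → 𝕜} {β : ι → κ → 𝕜} (hα : ∑ i, ‖α i‖ ^ 2 = 1) (hβ : ∀ i, ∑ j, ‖β i j‖ ^ 2 = 1) :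
    ∑ p : ι × κ, ‖α p.1 * β p.1 p.2‖ ^ 2 = 1 := by
  simp only [Fintype.sum_prod_type, norm_mul, mul_pow, ← mul_sum, hβ, mul_one, hα]

section Distribution

variable {κ : Type*} [Fintype κ] [DecidableEq κ] {p : κ → ℝ}

lemma exists_ne_of_forall_lt_one_sub (hp : ∑ j, p j = 1) {η : ℝ} (hη : 0 ≤ η)
    (h : ∀ j, p j < 1 - η) :
    ∃ j₁ j₂, j₂ ≠ j₁ ∧ 1 / Fintype.card κ ≤ p j₁ ∧ η / Fintype.card κ < p j₂ := by
  have hne : (univ : Finset κ).Nonempty := nonempty_of_sum_ne_zero (by rw [hp]; exact one_ne_zero)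
  have hcard : (0 : ℝ) < Fintype.card κ := by simpa using hne.card_pos
  obtain ⟨j₁, -, hj₁⟩ := exists_le_of_sum_le hne (f := fun _ => 1 / (Fintype.card κ : ℝ)) (g := p)
    (by simp [hp, hcard.ne'])
  obtain ⟨j₂, hj₂, hlt⟩ := exists_lt_of_sum_lt (s := univ.erase j₁)
    (f := fun _ => η / (Fintype.card κ : ℝ)) (g := p) <| calc
      ∑ _ ∈ univ.erase j₁, η / (Fintype.card κ : ℝ) ≤ ∑ _ : κ, η / (Fintype.card κ : ℝ) :=
        sum_le_sum_of_subset_of_nonneg (erase_subset _ _) fun _ _ _ => by positivity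
      _ = η := by simp only [sum_const, card_univ, nsmul_eq_mul]; field_simp
      _ < 1 - p j₁ := by linarith [h j₁]
      _ = ∑ j ∈ univ.erase j₁, p j := by rw [sum_erase_eq_sub (mem_univ j₁), hp]
  exact ⟨j₁, j₂, ne_of_mem_erase hj₂, hj₁, hlt⟩

lemma eq_of_half_lt_of_half_lt (hp0 : ∀ j, 0 ≤ p j) (hp : ∑ j, p j = 1) {j j' : κ}
    (hj : 1 / 2 < p j) (hj' : 1 / 2 < p j') : j = j' := by
  by_contra hne
  linarith [add_le_sum (fun k _ => hp0 k) (mem_univ j) (mem_univ j') hne]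

end Distribution

lemma le_sum_sum_sum_filter_ne {ι κ : Type*} [Fintype ι] [Fintype κ] [DecidableEq κ]
    {f : ι → κ → κ → ℝ} (hf : ∀ i j j', 0 ≤ f i j j') (i : ι) {j j' : κ} (hj : j' ≠ j) :
    f i j j' ≤ ∑ i, ∑ j, ∑ j' ∈ univ.filter (fun j' => j' ≠ j), f i j j' :=
  calc f i j j' ≤ ∑ j' ∈ univ.filter (fun j' => j' ≠ j), f i j j' :=
        single_le_sum (f := fun j' => f i j j') (fun _ _ => hf _ _ _) (by simpa using hj)
    _ ≤ ∑ j, ∑ j' ∈ univ.filter (fun j' => j' ≠ j), f i j j' :=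
        single_le_sum (f := fun j => ∑ j' ∈ univ.filter (fun j' => j' ≠ j), f i j j')
          (fun _ _ => sum_nonneg fun _ _ => hf _ _ _) (mem_univ j)
    _ ≤ _ :=
        single_le_sum (f := fun i => ∑ j, ∑ j' ∈ univ.filter (fun j' => j' ≠ j), f i j j')
          (fun _ _ => sum_nonneg fun _ _ => sum_nonneg fun _ _ => hf _ _ _) (mem_univ i)

lemma one_div_lt_mul_mul {N K a b₁ b₂ w : ℝ} (hN : 0 < N) (hK : 1 ≤ K)
    (ha : 1 / (8 * N) ≤ a) (hb₁ : 1 / K ≤ b₁) (hb₂ : 1 / (100 * K) / K ≤ b₂)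
    (hw : a * b₂ - 1 / (1600 * K ^ 2 * N) ≤ w) :
    1 / (1600 ^ 2 * K ^ 4 * N ^ 2) < a * b₁ * w := by
  have hK0 : 0 < K := by linarith
  have ha0 : 0 ≤ a := (by positivity : (0 : ℝ) ≤ 1 / (8 * N)).trans ha
  have hb₁0 : 0 ≤ b₁ := (by positivity : (0 : ℝ) ≤ 1 / K).trans hb₁
  have hw' : 1 / (1600 * N * K ^ 2) ≤ w := by
    have hab₂ := mul_le_mul ha hb₂ (by positivity) ha0
    have : 1 / (8 * N) * (1 / (100 * K) / K) - 1 / (1600 * K ^ 2 * N) =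
        1 / (1600 * N * K ^ 2) := by
      field_simp; ring
    linarith
  have hscale : 1 / (8 * N) * (1 / K) * (1 / (1600 * N * K ^ 2)) =
      200 * K * (1 / (1600 ^ 2 * K ^ 4 * N ^ 2)) := by
    field_simp; ring
  calc 1 / (1600 ^ 2 * K ^ 4 * N ^ 2) < 1 / (8 * N) * (1 / K) * (1 / (1600 * N * K ^ 2)) := by
        rw [hscale]
        exact lt_mul_of_one_lt_left (by positivity) (by linarith)
    _ ≤ a * b₁ * w := by gcongr

open Finset in
theorem stmt_14_general {N K : ℕ}
    (α₁ α₂ : Fin N → ℂ) (β₁ β₂ : Fin N → Fin K → ℂ)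
    (hα₁ : ∑ v, ‖α₁ v‖ ^ 2 = 1) (hα₂ : ∑ v, ‖α₂ v‖ ^ 2 = 1)
    (hβ₁ : ∀ v, ∑ j, ‖β₁ v j‖ ^ 2 = 1) (hβ₂ : ∀ v, ∑ j, ‖β₂ v j‖ ^ 2 = 1)
    (hswap : (1 - ‖∑ v, ∑ j, (starRingEnd ℂ) (α₁ v * β₁ v j) * (α₂ v * β₂ v j)‖ ^ 2) / 2 ≤
      1 / (2 * 1600 ^ 2 * K ^ 4 * N ^ 2))
    (hcons : ∑ v, ∑ j, ∑ j' ∈ Finset.univ.filter (fun j' : Fin K => j' ≠ j),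
        ‖α₁ v * β₁ v j‖ ^ 2 * ‖α₂ v * β₂ v j'‖ ^ 2 ≤ 1 / (1600 ^ 2 * K ^ 4 * N ^ 2)) :
    ∀ v : Fin N, 1 / (8 * N) ≤ ‖α₁ v‖ ^ 2 →
      ∃! j : Fin K, (100 * K - 1) / (100 * K) ≤ ‖β₁ v j‖ ^ 2 := by
  intro v hv
  have hN : (0 : ℝ) < N := by exact_mod_cast v.pos
  obtain ⟨j, -⟩ := nonempty_of_sum_ne_zero ((hβ₁ v).trans_ne one_ne_zero)
  have hK : (1 : ℝ) ≤ K := by exact_mod_cast j.pos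
  have hthreshold : (100 * (K : ℝ) - 1) / (100 * K) = 1 - 1 / (100 * K) := by
    field_simp
  have hswap' : 1 - ‖∑ p : Fin N × Fin K, starRingEnd ℂ (α₁ p.1 * β₁ p.1 p.2) *
      (α₂ p.1 * β₂ p.1 p.2)‖ ^ 2 ≤ (1 / (1600 * K ^ 2 * N)) ^ 2 := by
    have hε : (1 / (1600 * K ^ 2 * N) : ℝ) ^ 2 = 2 * (1 / (2 * 1600 ^ 2 * K ^ 4 * N ^ 2)) := by
      field_simp
    rw [Fintype.sum_prod_type, hε]
    linarith
  obtain ⟨j₀, hj₀⟩ : ∃ j, (100 * (K : ℝ) - 1) / (100 * K) ≤ ‖β₁ v j‖ ^ 2 := by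
    by_contra! hlight
    obtain ⟨j₁, j₂, hne, hj₁, hj₂⟩ := exists_ne_of_forall_lt_one_sub (hβ₁ v) (η := 1 / (100 * K))
      (by positivity) (by simpa only [hthreshold] using hlight)
    have hw := sub_le_norm_sq_of_one_sub_norm_sum_conj_mul_sq_le (sum_norm_mul_sq_eq_one hα₁ hβ₁)
      (sum_norm_mul_sq_eq_one hα₂ hβ₂) (by positivity) hswap' (v, j₂)
    have hterm := (le_sum_sum_sum_filter_ne (fun _ _ _ => by positivity) v hne).trans hcons
    simp only [norm_mul, mul_pow, Fintype.card_fin] at hj₁ hj₂ hw hterm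
    exact (one_div_lt_mul_mul hN hK hv hj₁ hj₂.le hw).not_ge (by linarith)
  have hhalf : 1 / 2 < (100 * (K : ℝ) - 1) / (100 * K) := by
    rw [lt_div_iff₀ (by positivity)]
    linarith
  exact ⟨j₀, hj₀, fun j hj => eq_of_half_lt_of_half_lt (fun _ => by positivity) (hβ₁ v)
    (hhalf.trans_le hj) (hhalf.trans_le hj₀)⟩

open Finset in
/-- Blier–Tapp Lemma 3.4: if the swap test rejects the pair `(Ψ¹, Ψ²)` with probability at most
`δ = 1/(2·1600²K⁴N²)` and the color-consistency test rejects with probability at most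
`μ = 1/(1600²K⁴N²)`, then every heavy vertex (`|α¹_v|² ≥ 1/(8N)`) has a unique color `j`
with `|β¹_{v,j}|² ≥ (100K−1)/(100K)`. -/
theorem stmt_14 {N K : ℕ} (hN : 0 < N) (hK : 0 < K)
    (α₁ α₂ : Fin N → ℂ) (β₁ β₂ : Fin N → Fin K → ℂ)
    (hα₁ : ∑ v, ‖α₁ v‖ ^ 2 = 1) (hα₂ : ∑ v, ‖α₂ v‖ ^ 2 = 1)
    (hβ₁ : ∀ v, ∑ j, ‖β₁ v j‖ ^ 2 = 1) (hβ₂ : ∀ v, ∑ j, ‖β₂ v j‖ ^ 2 = 1)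
    (hswap : (1 - ‖∑ v, ∑ j, (starRingEnd ℂ) (α₁ v * β₁ v j) * (α₂ v * β₂ v j)‖ ^ 2) / 2 ≤
      1 / (2 * 1600 ^ 2 * K ^ 4 * N ^ 2))
    (hcons : ∑ v, ∑ j, ∑ j' ∈ Finset.univ.filter (fun j' : Fin K => j' ≠ j),
        ‖α₁ v * β₁ v j‖ ^ 2 * ‖α₂ v * β₂ v j'‖ ^ 2 ≤ 1 / (1600 ^ 2 * K ^ 4 * N ^ 2)) :
    ∀ v : Fin N, 1 / (8 * N) ≤ ‖α₁ v‖ ^ 2 →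
      ∃! j : Fin K, (100 * K - 1) / (100 * K) ≤ ‖β₁ v j‖ ^ 2 :=
  stmt_14_general α₁ α₂ β₁ β₂ hα₁ hα₂ hβ₁ hβ₂ hswap hcons
end

section
/- Let N, K ≥ 1 and let Ψ ∈ ℂ^N ⊗ ℂ^K be a graph coloring state with amplitudes α_v, β_{v,j}. Suppose for every vertex v with |α_v|² ≥ 1/(8N) there exists a color j̃(v) with |β_{v,j̃(v)}|² ≥ (100K−1)/(100K). Then for every color j ∈ {0,…,K−1}, the probability p_j(Ψ) of measuring j in the color register of (I_N ⊗ F_K)Ψ satisfies p_j(Ψ) ≥ 1/(4K). -/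
/-!
On a heavy vertex the color amplitude `β_v` is concentrated on one color `j̃`, and the other colors
carry total ℓ¹-mass at most `√(K · 1/(100K)) = 1/10` by Cauchy–Schwarz; since the Fourier phases are
unimodular, the reverse triangle inequality bounds the Fourier coefficient by
`|β_{v,j̃}| - 1/10 ≥ √0.99 - 0.1`, whose square exceeds `4/5`. Light vertices carry total mass at
most `N · 1/(8N) = 1/8`, so `p_j ≥ (4/(5K)) · (7/8) ≥ 1/(4K)`.
-/

open Finset Real

section Concentration

variable {ι E : Type*} [Fintype ι] [DecidableEq ι] [SeminormedAddCommGroup E]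

theorem norm_sub_sum_erase_norm_le_norm_sum (x : ι → E) (i₀ : ι) :
    ‖x i₀‖ - ∑ i ∈ univ.erase i₀, ‖x i‖ ≤ ‖∑ i, x i‖ := by
  rw [← add_sum_erase _ _ (mem_univ i₀)]
  calc ‖x i₀‖ - ∑ i ∈ univ.erase i₀, ‖x i‖
      ≤ ‖x i₀‖ - ‖∑ i ∈ univ.erase i₀, x i‖ := by gcongr; exact norm_sum_le _ _
    _ ≤ ‖x i₀ + ∑ i ∈ univ.erase i₀, x i‖ := norm_sub_le_norm_add _ _

theorem sq_sum_erase_norm_le (x : ι → E) (i₀ : ι) :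
    (∑ i ∈ univ.erase i₀, ‖x i‖) ^ 2 ≤ Fintype.card ι * (∑ i, ‖x i‖ ^ 2 - ‖x i₀‖ ^ 2) := by
  have hrest : ∑ i ∈ univ.erase i₀, ‖x i‖ ^ 2 = ∑ i, ‖x i‖ ^ 2 - ‖x i₀‖ ^ 2 := by
    rw [← add_sum_erase _ _ (mem_univ i₀)]; ring
  have hcard : ((univ.erase i₀).card : ℝ) ≤ Fintype.card ι := by
    exact_mod_cast card_erase_le
  calc (∑ i ∈ univ.erase i₀, ‖x i‖) ^ 2
      ≤ (univ.erase i₀).card * ∑ i ∈ univ.erase i₀, ‖x i‖ ^ 2 := sq_sum_le_card_mul_sum_sq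
    _ ≤ Fintype.card ι * (∑ i, ‖x i‖ ^ 2 - ‖x i₀‖ ^ 2) := by
      rw [hrest]
      gcongr
      rw [← hrest]
      exact sum_nonneg fun i _ => sq_nonneg _

theorem four_fifths_le_norm_sum_sq_of_concentrated (x : ι → E) (hx : ∑ i, ‖x i‖ ^ 2 = 1)
    (i₀ : ι) (hi₀ : 1 - 1 / (100 * Fintype.card ι) ≤ ‖x i₀‖ ^ 2) :
    4 / 5 ≤ ‖∑ i, x i‖ ^ 2 := by
  set a := ‖x i₀‖
  set s := ∑ i ∈ univ.erase i₀, ‖x i‖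
  have hcard : (1 : ℝ) ≤ Fintype.card ι := by exact_mod_cast Fintype.card_pos_iff.mpr ⟨i₀⟩
  have ha : 99 / 100 ≤ a ^ 2 := by
    have : 1 / (100 * (Fintype.card ι : ℝ)) ≤ 1 / 100 := by gcongr; linarith
    linarith
  have hs_sq : s ^ 2 ≤ 1 / 100 := by
    calc (s ^ 2 : ℝ) ≤ Fintype.card ι * (1 - a ^ 2) := by
          simpa only [hx] using sq_sum_erase_norm_le x i₀
      _ ≤ Fintype.card ι * (1 / (100 * Fintype.card ι)) := by gcongr; linarith
      _ = 1 / 100 := by field_simp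
  have hs : s ≤ 1 / 10 := by nlinarith [sum_nonneg fun i (_ : i ∈ univ.erase i₀) => norm_nonneg (x i)]
  have has : 0 ≤ a - s := by nlinarith [norm_nonneg (x i₀)]
  -- `a ≥ √0.99 > 0.1 + √0.8`, so `(a - 1/10)² ≥ 4/5`
  nlinarith [pow_le_pow_left₀ has (norm_sub_sum_erase_norm_le_norm_sum x i₀) 2, norm_nonneg (x i₀)]

end Concentration

theorem sum_sub_card_mul_le_sum_filter {ι : Type*} [Fintype ι] (w : ι → ℝ) {t : ℝ} (ht : 0 ≤ t) :
    ∑ v, w v - Fintype.card ι * t ≤ ∑ v ∈ univ.filter (fun v => t ≤ w v), w v := by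
  have hlight : ∑ v ∈ univ.filter (fun v => ¬ t ≤ w v), w v ≤ Fintype.card ι * t :=
    calc ∑ v ∈ univ.filter (fun v => ¬ t ≤ w v), w v
        ≤ (univ.filter (fun v => ¬ t ≤ w v)).card • t :=
          sum_le_card_nsmul _ _ _ fun v hv => (not_le.mp (mem_filter.mp hv).2).le
      _ ≤ Fintype.card ι * t := by
          rw [nsmul_eq_mul]; gcongr; exact_mod_cast card_filter_le _ _
  linarith [sum_filter_add_sum_filter_not univ (fun v => t ≤ w v) w]

theorem mul_one_sub_card_mul_le_sum_mul {ι : Type*} [Fintype ι] (w g : ι → ℝ)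
    (hw : ∀ v, 0 ≤ w v) (hw1 : ∑ v, w v = 1) (hg : ∀ v, 0 ≤ g v) {t c : ℝ} (ht : 0 ≤ t)
    (hc : 0 ≤ c) (hheavy : ∀ v, t ≤ w v → c ≤ g v) :
    c * (1 - Fintype.card ι * t) ≤ ∑ v, w v * g v := by
  set S := univ.filter (fun v => t ≤ w v)
  calc c * (1 - Fintype.card ι * t) ≤ c * ∑ v ∈ S, w v := by
        gcongr; simpa [hw1] using sum_sub_card_mul_le_sum_filter w ht
    _ = ∑ v ∈ S, w v * c := by rw [mul_sum]; exact sum_congr rfl fun v _ => mul_comm _ _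
    _ ≤ ∑ v ∈ S, w v * g v :=
        sum_le_sum fun v hv => mul_le_mul_of_nonneg_left (hheavy v (mem_filter.mp hv).2) (hw v)
    _ ≤ ∑ v, w v * g v :=
        sum_le_sum_of_subset_of_nonneg (subset_univ S) fun v _ _ => mul_nonneg (hw v) (hg v)

open Finset Real in
theorem stmt_15_general {N K : ℕ}
    (α : Fin N → ℂ) (β : Fin N → Fin K → ℂ)
    (hα : ∑ v, ‖α v‖ ^ 2 = 1) (hβ : ∀ v, ∑ j, ‖β v j‖ ^ 2 = 1)
    (hheavy : ∀ v : Fin N, 1 / (8 * N) ≤ ‖α v‖ ^ 2 →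
      ∃ jt : Fin K, (100 * K - 1) / (100 * K) ≤ ‖β v jt‖ ^ 2) :
    ∀ j : Fin K,
      (1 : ℝ) / (4 * K) ≤ ∑ v, ‖α v‖ ^ 2 *
        (((1 : ℝ) / K) * ‖∑ j' : Fin K,
          β v j' * Complex.exp (2 * Real.pi * Complex.I * ((j' : ℕ) * (j : ℕ) / K))‖ ^ 2) := by
  intro j
  have hK : (0 : ℝ) < K := by exact_mod_cast j.pos
  set x : Fin N → Fin K → ℂ := fun v j' =>
    β v j' * Complex.exp (2 * Real.pi * Complex.I * ((j' : ℕ) * (j : ℕ) / K))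
  have hx : ∀ v j', ‖x v j'‖ = ‖β v j'‖ := fun v j' => by simp [x, Complex.norm_exp]
  have hcoeff : ∀ v, 1 / (8 * N) ≤ ‖α v‖ ^ 2 → 4 / (5 * K) ≤ (1 / K) * ‖∑ j', x v j'‖ ^ 2 := by
    intro v hv
    obtain ⟨jt, hjt⟩ := hheavy v hv
    have hconc := four_fifths_le_norm_sum_sq_of_concentrated (x v) (by simpa [hx] using hβ v) jt
      (by rw [hx]; convert hjt using 1; simp only [Fintype.card_fin]; field_simp)
    rw [div_le_iff₀' (by positivity)]
    field_simp
    linarith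
  have hlight : (N : ℝ) * (1 / (8 * N)) ≤ 1 / 8 := by
    rcases N.eq_zero_or_pos with rfl | hN
    · norm_num
    · exact (show (N : ℝ) * (1 / (8 * N)) = 1 / 8 by field_simp).le
  calc (1 : ℝ) / (4 * K) ≤ 4 / (5 * K) * (1 - 1 / 8) := by
        rw [div_le_iff₀' (by positivity)]; field_simp; norm_num
    _ ≤ 4 / (5 * K) * (1 - N * (1 / (8 * N))) := by gcongr
    _ ≤ _ := by
        simpa using mul_one_sub_card_mul_le_sum_mul (fun v => ‖α v‖ ^ 2) _
          (fun v => sq_nonneg _) hα (fun v => by positivity) (by positivity) (by positivity) hcoeff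

open Finset Real in
/-- Blier–Tapp Lemma 3.5: if every heavy vertex (`|α_v|² ≥ 1/(8N)`) has an almost-deterministic
color (`|β_{v,j̃}|² ≥ (100K−1)/(100K)` for some `j̃`), then every color `j` is measured in the
color register of `(I_N ⊗ F_K)Ψ` with probability at least `1/(4K)`. -/
theorem stmt_15 {N K : ℕ} (hN : 0 < N) (hK : 0 < K)
    (α : Fin N → ℂ) (β : Fin N → Fin K → ℂ)
    (hα : ∑ v, ‖α v‖ ^ 2 = 1) (hβ : ∀ v, ∑ j, ‖β v j‖ ^ 2 = 1)
    (hheavy : ∀ v : Fin N, 1 / (8 * N) ≤ ‖α v‖ ^ 2 →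
      ∃ jt : Fin K, (100 * K - 1) / (100 * K) ≤ ‖β v jt‖ ^ 2) :
    ∀ j : Fin K,
      (1 : ℝ) / (4 * K) ≤ ∑ v, ‖α v‖ ^ 2 *
        (((1 : ℝ) / K) * ‖∑ j' : Fin K,
          β v j' * Complex.exp (2 * Real.pi * Complex.I * ((j' : ℕ) * (j : ℕ) / K))‖ ^ 2) :=
  stmt_15_general α β hα hβ hheavy
end

section
/- Let N, K ≥ 1 and let Ψ ∈ ℂ^N ⊗ ℂ^K be a graph coloring state with p_j(Ψ) ≥ 1/(4K) for all colors j. If some vertex ṽ has |α_{ṽ}|² < 1/(8KN), then for every color j, the probability of measuring color j but a vertex outcome different from ṽ when measuring (F_N ⊗ F_K)Ψ is greater than 1/(64KN²). -/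
/-!
Fix a color `j` and put `γ w = α w · (F_K β_w)(j)`. Then the amplitude of `(F_N ⊗ F_K)Ψ` at
`(v, j)` is `(F_N γ)(v)` and `‖γ‖² = p_j`, so by Parseval the probability in question is
`p_j - |(F_N γ)(ṽ)|²`, while `|(F_N γ)(ṽ)|² ≤ (∑ |γ w|)² / N` by the triangle inequality.
Since `|(F_K β_w)(j)| ≤ ‖β_w‖ = 1`, the vertex `ṽ` stays light for `γ`:
`|γ ṽ|² ≤ |α ṽ|² < p_j / (2N)`. Hence the weights `|γ w|²` deviate from their mean `p_j / N`
by more than `p_j / (2N)` in `ℓ¹`, and Cauchy–Schwarz turns this deviation into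
`(∑ |γ w|)² / N < p_j (1 - 1/(16N²))`. Finally `p_j ≥ 1/(4K)`.
-/

namespace FourierColoring

lemma norm_exp_two_pi_I_mul (a b c : ℕ) :
    ‖Complex.exp (2 * Real.pi * Complex.I * ((a : ℂ) * b / c))‖ = 1 := by
  have h : 2 * (Real.pi : ℂ) * Complex.I * ((a : ℂ) * b / c)
      = ((2 * Real.pi * (a * b / c) : ℝ) : ℂ) * Complex.I := by push_cast; ring
  rw [h, Complex.norm_exp_ofReal_mul_I]

lemma norm_one_div_sqrt_sq (n : ℕ) : ‖(1 / Real.sqrt n : ℂ)‖ ^ 2 = 1 / n := by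
  rw [← Complex.ofReal_one, ← Complex.ofReal_div, Complex.norm_real, Real.norm_eq_abs, sq_abs,
    div_pow, one_pow, Real.sq_sqrt n.cast_nonneg]

lemma exp_mul_conj_exp {N : ℕ} (v w w' : Fin N) :
    Complex.exp (2 * Real.pi * Complex.I * ((v : ℕ) * (w : ℕ) / N)) *
        starRingEnd ℂ (Complex.exp (2 * Real.pi * Complex.I * ((v : ℕ) * (w' : ℕ) / N)))
      = Complex.exp (2 * Real.pi * Complex.I * (((w : ℕ) - (w' : ℕ) : ℂ) / N)) ^ (v : ℕ) := by
  rw [← Complex.exp_conj, ← Complex.exp_nat_mul, ← Complex.exp_add]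
  congr 1
  simp only [map_mul, map_div₀, Complex.conj_I, Complex.conj_ofReal, map_natCast, map_ofNat]
  ring

lemma exp_two_pi_I_sub_ne_one {N : ℕ} {w w' : Fin N} (h : w ≠ w') :
    Complex.exp (2 * Real.pi * Complex.I * (((w : ℕ) - (w' : ℕ) : ℂ) / N)) ≠ 1 := by
  rw [Ne, Complex.exp_eq_one_iff]
  rintro ⟨n, hn⟩
  have hN : (N : ℂ) ≠ 0 := by exact_mod_cast w.pos.ne'
  have hsub : ((w : ℕ) - (w' : ℕ) : ℤ) = n * N := by
    have : ((w : ℕ) - (w' : ℕ) : ℂ) = n * N := by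
      field_simp at hn
      linear_combination hn
    exact_mod_cast this
  have hzero := Int.eq_zero_of_abs_lt_dvd ⟨n, by rw [hsub, mul_comm]⟩
    (abs_sub_lt_iff.mpr ⟨by omega, by omega⟩)
  exact h (Fin.ext (by omega))

lemma sum_exp_mul_conj_exp {N : ℕ} (w w' : Fin N) :
    ∑ v : Fin N, Complex.exp (2 * Real.pi * Complex.I * ((v : ℕ) * (w : ℕ) / N)) *
        starRingEnd ℂ (Complex.exp (2 * Real.pi * Complex.I * ((v : ℕ) * (w' : ℕ) / N)))
      = if w = w' then (N : ℂ) else 0 := by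
  simp_rw [exp_mul_conj_exp]
  rw [Fin.sum_univ_eq_sum_range (fun v => _ ^ v)]
  split_ifs with h
  · simp [h]
  · rw [geom_sum_eq (exp_two_pi_I_sub_ne_one h), ← Complex.exp_nat_mul]
    have : (N : ℂ) * (2 * Real.pi * Complex.I * (((w : ℕ) - (w' : ℕ) : ℂ) / N))
        = (((w : ℕ) - (w' : ℕ) : ℤ) : ℂ) * (2 * Real.pi * Complex.I) := by
      have hN : (N : ℂ) ≠ 0 := by exact_mod_cast w.pos.ne'
      push_cast
      field_simp
    rw [this, Complex.exp_int_mul_two_pi_mul_I, sub_self, zero_div]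

/-- The unitary discrete Fourier transform `F_N` on `ℂ^N`. -/
noncomputable def unitaryDFT {N : ℕ} (γ : Fin N → ℂ) (v : Fin N) : ℂ :=
  (1 / Real.sqrt N : ℂ) *
    ∑ w : Fin N, Complex.exp (2 * Real.pi * Complex.I * ((v : ℕ) * (w : ℕ) / N)) * γ w

lemma sum_norm_unitaryDFT_sq {N : ℕ} (γ : Fin N → ℂ) :
    ∑ v, ‖unitaryDFT γ v‖ ^ 2 = ∑ w, ‖γ w‖ ^ 2 := by
  set e : Fin N → Fin N → ℂ :=
    fun v w => Complex.exp (2 * Real.pi * Complex.I * ((v : ℕ) * (w : ℕ) / N))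
  have hsum : ∑ v, ‖∑ w, e v w * γ w‖ ^ 2 = N * ∑ w, ‖γ w‖ ^ 2 := by
    apply Complex.ofReal_injective
    push_cast
    simp_rw [← Complex.mul_conj', map_sum, map_mul, Finset.sum_mul_sum, Finset.mul_sum]
    calc ∑ v, ∑ w, ∑ w', e v w * γ w * (starRingEnd ℂ (e v w') * starRingEnd ℂ (γ w'))
        = ∑ w, ∑ w', γ w * starRingEnd ℂ (γ w') * ∑ v, e v w * starRingEnd ℂ (e v w') := by
          rw [Finset.sum_comm]
          refine Finset.sum_congr rfl fun w _ => ?_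
          rw [Finset.sum_comm]
          simp_rw [Finset.mul_sum]
          exact Finset.sum_congr rfl fun w' _ => Finset.sum_congr rfl fun v _ => by ring
      _ = ∑ w, (N : ℂ) * (γ w * starRingEnd ℂ (γ w)) := by
          simp_rw [e, sum_exp_mul_conj_exp, mul_ite, mul_zero, Finset.sum_ite_eq,
            Finset.mem_univ, if_true, mul_comm]
  unfold unitaryDFT
  simp_rw [norm_mul, mul_pow, norm_one_div_sqrt_sq, ← Finset.mul_sum]
  change 1 / (N : ℝ) * ∑ v, ‖∑ w, e v w * γ w‖ ^ 2 = _
  rcases N.eq_zero_or_pos with hN | hN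
  · subst hN; simp
  · rw [hsum]; field_simp

lemma norm_unitaryDFT_sq_le {N : ℕ} (γ : Fin N → ℂ) (v : Fin N) :
    ‖unitaryDFT γ v‖ ^ 2 ≤ ∑ w, ‖γ w‖ ^ 2 :=
  sum_norm_unitaryDFT_sq γ ▸
    Finset.single_le_sum (f := fun v => ‖unitaryDFT γ v‖ ^ 2) (fun _ _ => by positivity)
      (Finset.mem_univ v)

lemma norm_unitaryDFT_sq_le_sq_sum_norm {N : ℕ} (γ : Fin N → ℂ) (v : Fin N) :
    ‖unitaryDFT γ v‖ ^ 2 ≤ (∑ w, ‖γ w‖) ^ 2 / N := by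
  have hsum : ‖∑ w : Fin N, Complex.exp (2 * Real.pi * Complex.I * ((v : ℕ) * (w : ℕ) / N)) * γ w‖
      ≤ ∑ w, ‖γ w‖ :=
    (norm_sum_le _ _).trans_eq
      (Finset.sum_congr rfl fun w _ => by rw [norm_mul, norm_exp_two_pi_I_mul, one_mul])
  rw [unitaryDFT, norm_mul, mul_pow, norm_one_div_sqrt_sq, one_div_mul_eq_div]
  gcongr

section
variable {ι : Type*} [Fintype ι]

lemma sq_sum_abs_sq_sub_sq_le (x : ι → ℝ) (hx : ∀ k, 0 ≤ x k) {c : ℝ} (hc : 0 ≤ c) :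
    (∑ k, |x k ^ 2 - c ^ 2|) ^ 2
      ≤ (∑ k, x k ^ 2 + Fintype.card ι * c ^ 2) ^ 2 - 4 * c ^ 2 * (∑ k, x k) ^ 2 := by
  have hfactor : ∀ k, |x k ^ 2 - c ^ 2| = |x k - c| * (x k + c) := fun k => by
    rw [sq_sub_sq, abs_mul, abs_of_nonneg (add_nonneg (hx k) hc), mul_comm]
  have hexpand : ∀ s : ℝ, ∑ k, (x k + s) ^ 2
      = ∑ k, x k ^ 2 + 2 * s * ∑ k, x k + Fintype.card ι * s ^ 2 := fun s => by
    have hterm : ∀ k, (x k + s) ^ 2 = x k ^ 2 + 2 * s * x k + s ^ 2 := fun k => by ring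
    simp only [hterm, Finset.sum_add_distrib, ← Finset.mul_sum, Finset.sum_const,
      Finset.card_univ, nsmul_eq_mul]
  have hcs := Finset.sum_mul_sq_le_sq_mul_sq Finset.univ (fun k => |x k - c|) (fun k => x k + c)
  simp only [sq_abs, sub_eq_add_neg, hexpand] at hcs
  simp only [hfactor, ← sub_eq_add_neg] at hcs ⊢
  linear_combination hcs

/-- With `c² = (∑ x²) / n`, the light coordinate forces `∑ |x k ² - c²| > (∑ x²) / (2n)`,
and `sq_sum_abs_sq_sub_sq_le` turns this deviation into the gap. -/
lemma sq_sum_div_card_lt (x : ι → ℝ) (hx : ∀ k, 0 ≤ x k) (i : ι)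
    (hi : x i ^ 2 < (∑ k, x k ^ 2) / (2 * Fintype.card ι)) :
    (∑ k, x k) ^ 2 / Fintype.card ι
      < ∑ k, x k ^ 2 - (∑ k, x k ^ 2) / (16 * Fintype.card ι ^ 2) := by
  have : Nonempty ι := ⟨i⟩
  set p := ∑ k, x k ^ 2
  set n : ℝ := (Fintype.card ι : ℝ)
  have hn : 0 < n := Nat.cast_pos.mpr Fintype.card_pos
  have hp : 0 < p :=
    (div_pos_iff_of_pos_right (by positivity)).mp ((sq_nonneg (x i)).trans_lt hi)
  set c := Real.sqrt (p / n)
  have hc : c ^ 2 = p / n := Real.sq_sqrt (by positivity)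
  set E := ∑ k, |x k ^ 2 - c ^ 2|
  have hdev : p / (2 * n) < E := by
    calc p / (2 * n) = c ^ 2 - p / (2 * n) := by rw [hc]; field_simp; ring
      _ < c ^ 2 - x i ^ 2 := by linarith
      _ ≤ |x i ^ 2 - c ^ 2| := by rw [abs_sub_comm]; exact le_abs_self _
      _ ≤ E := Finset.single_le_sum (f := fun k => |x k ^ 2 - c ^ 2|)
          (fun _ _ => abs_nonneg _) (Finset.mem_univ i)
  have hbound : E ^ 2 ≤ 4 * p ^ 2 - 4 * (p / n) * (∑ k, x k) ^ 2 := by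
    calc E ^ 2 ≤ (p + n * c ^ 2) ^ 2 - 4 * c ^ 2 * (∑ k, x k) ^ 2 :=
          sq_sum_abs_sq_sub_sq_le x hx (Real.sqrt_nonneg (p / n))
      _ = _ := by rw [hc, mul_div_cancel₀ p hn.ne']; ring
  have hsq : (p / (2 * n)) ^ 2 < E ^ 2 := by gcongr
  have hscaled : p * ((∑ k, x k) ^ 2 / n) < p * (p - p / (16 * n ^ 2)) := by
    have e1 : p * ((∑ k, x k) ^ 2 / n) = p / n * (∑ k, x k) ^ 2 := by ring
    have e2 : p * (p - p / (16 * n ^ 2)) = p ^ 2 - (p / (2 * n)) ^ 2 / 4 := by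
      field_simp; ring
    rw [e1, e2]
    linarith
  exact lt_of_mul_lt_mul_left hscaled hp.le

end

lemma one_div_sqrt_mul_sum_exp_mul_eq_unitaryDFT {K : ℕ} (β : Fin K → ℂ) (j : Fin K) :
    (1 / Real.sqrt K : ℂ) *
        ∑ j' : Fin K, β j' * Complex.exp (2 * Real.pi * Complex.I * ((j' : ℕ) * (j : ℕ) / K))
      = unitaryDFT β j := by
  unfold unitaryDFT
  congr 1
  refine Finset.sum_congr rfl fun j' _ => ?_
  rw [mul_comm, mul_comm ((j' : ℕ) : ℂ)]

lemma tensor_unitaryDFT_apply {N K : ℕ} (α : Fin N → ℂ) (β : Fin N → Fin K → ℂ)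
    (v : Fin N) (j : Fin K) :
    (1 / Real.sqrt N : ℂ) * (1 / Real.sqrt K : ℂ) *
        ∑ w : Fin N, ∑ j' : Fin K,
          Complex.exp (2 * Real.pi * Complex.I * ((v : ℕ) * (w : ℕ) / N)) *
          Complex.exp (2 * Real.pi * Complex.I * ((j' : ℕ) * (j : ℕ) / K)) *
          (α w * β w j')
      = unitaryDFT (fun w => α w * unitaryDFT (β w) j) v := by
  simp only [unitaryDFT, Finset.mul_sum]
  exact Finset.sum_congr rfl fun w _ => Finset.sum_congr rfl fun j' _ => by ring_nf

end FourierColoring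

open FourierColoring

open Finset Real in
theorem stmt_16_general {N K : ℕ}
    (α : Fin N → ℂ) (β : Fin N → Fin K → ℂ)
    (hβ : ∀ v, ∑ j, ‖β v j‖ ^ 2 = 1)
    (hp : ∀ j : Fin K,
      1 / (4 * K) ≤ ∑ v, ‖α v * ((1 / Real.sqrt K : ℂ) *
        ∑ j' : Fin K,
          β v j' * Complex.exp (2 * Real.pi * Complex.I * ((j' : ℕ) * (j : ℕ) / K)))‖ ^ 2)
    (vt : Fin N) (hvt : ‖α vt‖ ^ 2 < 1 / (8 * K * N)) :
    ∀ j : Fin K,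
      1 / (64 * K * N ^ 2) <
        ∑ v ∈ Finset.univ.filter (fun v : Fin N => v ≠ vt),
          ‖(1 / Real.sqrt N : ℂ) * (1 / Real.sqrt K : ℂ) *
            ∑ w : Fin N, ∑ j' : Fin K,
              Complex.exp (2 * Real.pi * Complex.I * ((v : ℕ) * (w : ℕ) / N)) *
              Complex.exp (2 * Real.pi * Complex.I * ((j' : ℕ) * (j : ℕ) / K)) *
              (α w * β w j')‖ ^ 2 := by
  intro j
  have hN : (0 : ℝ) < N := Nat.cast_pos.mpr vt.pos
  have hK : (0 : ℝ) < K := Nat.cast_pos.mpr j.pos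
  set γ : Fin N → ℂ := fun w => α w * unitaryDFT (β w) j
  set p := ∑ w, ‖γ w‖ ^ 2
  have hpj : 1 / (4 * K) ≤ p := by
    simpa only [one_div_sqrt_mul_sum_exp_mul_eq_unitaryDFT] using hp j
  have hγ_le : ∀ w, ‖γ w‖ ^ 2 ≤ ‖α w‖ ^ 2 := fun w => by
    rw [norm_mul, mul_pow]
    exact mul_le_of_le_one_right (by positivity) ((norm_unitaryDFT_sq_le _ j).trans (hβ w).le)
  have hlight : ‖γ vt‖ ^ 2 < p / (2 * Fintype.card (Fin N)) := by
    calc ‖γ vt‖ ^ 2 ≤ ‖α vt‖ ^ 2 := hγ_le vt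
      _ < 1 / (8 * K * N) := hvt
      _ ≤ p / (2 * Fintype.card (Fin N)) := by
        rw [Fintype.card_fin, div_le_div_iff₀ (by positivity) (by positivity)]
        rw [div_le_iff₀ (by positivity)] at hpj
        nlinarith
  have hgap := sq_sum_div_card_lt (fun w => ‖γ w‖) (fun _ => norm_nonneg _) vt hlight
  rw [Fintype.card_fin] at hgap
  have hmargin : 1 / (64 * K * N ^ 2) ≤ p / (16 * N ^ 2) := by
    rw [div_le_div_iff₀ (by positivity) (by positivity)]
    rw [div_le_iff₀ (by positivity)] at hpj
    nlinarith
  simp only [tensor_unitaryDFT_apply]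
  rw [Finset.filter_ne', Finset.sum_erase_eq_sub (Finset.mem_univ vt), sum_norm_unitaryDFT_sq]
  linarith [norm_unitaryDFT_sq_le_sq_sum_norm γ vt]

open Finset Real in
/-- Blier–Tapp Lemma 3.7 (core step): if every color is measured with probability at least
`1/(4K)` after `I_N ⊗ F_K`, and some vertex `ṽ` is light (`|α_ṽ|² < 1/(8KN)`), then for every
color `j`, measuring `(F_N ⊗ F_K)Ψ` yields color `j` together with a vertex outcome different
from `ṽ` with probability greater than `1/(64KN²)`. -/
theorem stmt_16 {N K : ℕ} (hN : 0 < N) (hK : 0 < K)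
    (α : Fin N → ℂ) (β : Fin N → Fin K → ℂ)
    (hα : ∑ v, ‖α v‖ ^ 2 = 1) (hβ : ∀ v, ∑ j, ‖β v j‖ ^ 2 = 1)
    (hp : ∀ j : Fin K,
      1 / (4 * K) ≤ ∑ v, ‖α v * ((1 / Real.sqrt K : ℂ) *
        ∑ j' : Fin K,
          β v j' * Complex.exp (2 * Real.pi * Complex.I * ((j' : ℕ) * (j : ℕ) / K)))‖ ^ 2)
    (vt : Fin N) (hvt : ‖α vt‖ ^ 2 < 1 / (8 * K * N)) :
    ∀ j : Fin K,
      1 / (64 * K * N ^ 2) <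
        ∑ v ∈ Finset.univ.filter (fun v : Fin N => v ≠ vt),
          ‖(1 / Real.sqrt N : ℂ) * (1 / Real.sqrt K : ℂ) *
            ∑ w : Fin N, ∑ j' : Fin K,
              Complex.exp (2 * Real.pi * Complex.I * ((v : ℕ) * (w : ℕ) / N)) *
              Complex.exp (2 * Real.pi * Complex.I * ((j' : ℕ) * (j : ℕ) / K)) *
              (α w * β w j')‖ ^ 2 :=
  stmt_16_general α β hβ hp vt hvt
end

section
/- Let G be a graph on N vertices with edge-constraint predicates {R_e} over a color set Σ of size K, and suppose these constraints are unsatisfiable (every coloring C: V → Σ violates at least one edge). Let Ψ⁽¹⁾, Ψ⁽²⁾ be graph coloring states such that for t = 1, 2 and every vertex v: |α_v⁽ᵗ⁾|² ≥ 1/(8KN) and |β⁽ᵗ⁾_{v,C(v)}|² ≥ (100K−1)/(100K), where C(v) := argmax_j |β⁽¹⁾_{v,j}|². Then the edge-consistency test rejects with probability at least (100K−1)²/(800²K⁴N²), i.e., Σ over violated edges (v,w) of |α_v⁽¹⁾β⁽¹⁾_{v,C(v)}|²·|α_w⁽²⁾β⁽²⁾_{w,C(w)}|² ≥ (100K−1)²/(800²K⁴N²).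 -/
open Finset in
/-- If the edge constraints are unsatisfiable and both graph coloring states put mass at least
`1/(8KN)` on every vertex and mass at least `(100K−1)/(100K)` on the argmax color `C(v)` of the
first state, then the edge-consistency test rejects with probability at least
`(100K−1)²/(800²K⁴N²)`. -/
theorem stmt_17 {N K : ℕ} (hN : 0 < N) (hK : 0 < K)
    (E : Finset (Fin N × Fin N)) (R : Fin N × Fin N → Fin K → Fin K → Prop)
    [∀ e j j', Decidable (R e j j')]
    (hunsat : ∀ C : Fin N → Fin K, ∃ e ∈ E, ¬ R e (C e.1) (C e.2))
    (α₁ α₂ : Fin N → ℂ) (β₁ β₂ : Fin N → Fin K → ℂ)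
    (hα₁ : ∑ v, ‖α₁ v‖ ^ 2 = 1) (hα₂ : ∑ v, ‖α₂ v‖ ^ 2 = 1)
    (hβ₁ : ∀ v, ∑ j, ‖β₁ v j‖ ^ 2 = 1) (hβ₂ : ∀ v, ∑ j, ‖β₂ v j‖ ^ 2 = 1)
    (C : Fin N → Fin K)
    (hargmax : ∀ v, ∀ j, ‖β₁ v j‖ ^ 2 ≤ ‖β₁ v (C v)‖ ^ 2)
    (hheavy₁ : ∀ v, 1 / (8 * K * N) ≤ ‖α₁ v‖ ^ 2)
    (hheavy₂ : ∀ v, 1 / (8 * K * N) ≤ ‖α₂ v‖ ^ 2)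
    (hcol₁ : ∀ v, (100 * K - 1) / (100 * K) ≤ ‖β₁ v (C v)‖ ^ 2)
    (hcol₂ : ∀ v, (100 * K - 1) / (100 * K) ≤ ‖β₂ v (C v)‖ ^ 2) :
    (100 * K - 1) ^ 2 / (800 ^ 2 * K ^ 4 * N ^ 2) ≤
      ∑ e ∈ E.filter (fun e => ¬ R e (C e.1) (C e.2)),
        ‖α₁ e.1 * β₁ e.1 (C e.1)‖ ^ 2 * ‖α₂ e.2 * β₂ e.2 (C e.2)‖ ^ 2 := by

  obtain ⟨e, heE, heR⟩ := hunsat C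
  have hKpos : (0:ℝ) < (K:ℝ) := by exact_mod_cast hK
  have hNpos : (0:ℝ) < (N:ℝ) := by exact_mod_cast hN
  have hK1 : (1:ℝ) ≤ (K:ℝ) := by exact_mod_cast hK
  set a : ℝ := 1 / (8 * K * N) with ha
  set b : ℝ := (100 * K - 1) / (100 * K) with hb
  have hapos : 0 < a := by positivity
  have hbpos : 0 < b := by
    apply div_pos <;> nlinarith
  have key : (100 * (K:ℝ) - 1) ^ 2 / (800 ^ 2 * K ^ 4 * N ^ 2) = (a * b) ^ 2 := by
    rw [ha, hb, div_mul_div_comm, div_pow]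
    rw [one_mul]
    congr 1
    ring
  have hterm : ∀ (t : ℝ), a * b ≤ t →
      True := fun _ _ => trivial
  have hx : a * b ≤ ‖α₁ e.1 * β₁ e.1 (C e.1)‖ ^ 2 := by
    rw [norm_mul, mul_pow]
    exact mul_le_mul (hheavy₁ e.1) (hcol₁ e.1) hbpos.le (by positivity)
  have hy : a * b ≤ ‖α₂ e.2 * β₂ e.2 (C e.2)‖ ^ 2 := by
    rw [norm_mul, mul_pow]
    exact mul_le_mul (hheavy₂ e.2) (hcol₂ e.2) hbpos.le (by positivity)
  have habpos : 0 < a * b := mul_pos hapos hbpos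
  have hsingle : (a * b) ^ 2 ≤
      ‖α₁ e.1 * β₁ e.1 (C e.1)‖ ^ 2 * ‖α₂ e.2 * β₂ e.2 (C e.2)‖ ^ 2 := by
    rw [sq]
    exact mul_le_mul hx hy habpos.le (by positivity)
  rw [key]
  refine le_trans hsingle ?_
  exact Finset.single_le_sum (f := fun e : Fin N × Fin N => ‖α₁ e.1 * β₁ e.1 (C e.1)‖ ^ 2 * ‖α₂ e.2 * β₂ e.2 (C e.2)‖ ^ 2) (fun i _ => mul_nonneg (sq_nonneg _) (sq_nonneg _))
    (Finset.mem_filter.mpr ⟨heE, heR⟩)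
end
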